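/- For a rooted tree T and a subset H of its edges, the interval [H, ∅] of the pruning poset is order-isomorphic to the lattice of order ideals of the poset (H, ≽) (H with the reversed edge order), ordered by reversed set inclusion. Consequently, every interval of the pruning poset is a lattice. -/
import Mathlib


/-- A finite rooted tree, encoded by its tree partial order on the vertex set `V`:
the root is the bottom element `⊥`, and any two ancestors of a common vertex are
comparable. -/
def TreeOrder (V : Type*) [PartialOrder V] [OrderBot V] : Prop :=
  ∀ a b c : V, b ≤ a → c ≤ a → (b ≤ c ∨ c ≤ b)

/-- Edges of the rooted tree, identified with their upper ends (the non-root vertices).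
The induced partial order on edges is the subtype order. -/
abbrev Edge (V : Type*) [PartialOrder V] [OrderBot V] := {v : V // v ≠ ⊥}

/-- The stump set `V_γ(H)`: the vertex set of the connected component of the root
in the forest `T − H`. -/
def stump {V : Type*} [PartialOrder V] [OrderBot V] (H : Set (Edge V)) : Set V :=
  {v | ∀ e ∈ H, ¬ (e.val ≤ v)}

/-- The pruning order: `H ≼_P K` iff `H = K ∪ A` for some set `A` of edges of the
stump tree of `T − K`. -/
def pleP {V : Type*} [PartialOrder V] [OrderBot V] (H K : Set (Edge V)) : Prop :=
  ∃ A : Set (Edge V), A ⊆ {e : Edge V | e.val ∈ stump K} ∧ H = K ∪ A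

lemma pleP_iff {V : Type*} [PartialOrder V] [OrderBot V] (X Y : Set (Edge V)) :
    pleP X Y ↔ Y ⊆ X ∧ ∀ e ∈ X, ∀ f ∈ Y, f.val ≤ e.val → e ∈ Y := by
  constructor
  · rintro ⟨A, hA, rfl⟩
    refine ⟨Set.subset_union_left, ?_⟩
    rintro e (he | he) f hf hle
    · exact he
    · exact absurd hle (hA he f hf)
  · rintro ⟨hsub, hup⟩
    refine ⟨X \ Y, ?_, ?_⟩
    · rintro e ⟨heX, heY⟩ f hf hle
      exact heY (hup e heX f hf hle)
    · exact (Set.union_diff_cancel hsub).symm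

lemma pleP_empty {V : Type*} [PartialOrder V] [OrderBot V] (I : Set (Edge V)) :
    pleP I (∅ : Set (Edge V)) :=
  ⟨I, fun _ _ f hf => absurd hf (Set.notMem_empty f), (Set.empty_union I).symm⟩

/-- the interval `[H, ∅]` of the pruning poset is order-isomorphic to the
lattice of order ideals of `(H, ≽)` (subsets of `H` downward closed for the reversed
edge order, i.e. upward closed in `≼`), ordered by reversed set inclusion.
Consequently, every interval `[H', K]` of the pruning poset is a lattice: any two of its
elements have a greatest lower bound and a least upper bound within the interval. -/
theorem pruning_interval_ideals_and_lattice {V : Type*} [Fintype V] [PartialOrder V]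
    [OrderBot V] (hT : TreeOrder V) (H : Set (Edge V)) :
    (∃ φ : {I : Set (Edge V) // pleP H I ∧ pleP I (∅ : Set (Edge V))} ≃
           {I : Set (Edge V) // I ⊆ H ∧ ∀ a ∈ I, ∀ b ∈ H, a ≤ b → b ∈ I},
        ∀ a b, pleP a.val b.val ↔ (φ b).val ⊆ (φ a).val) ∧
    (∀ H' K : Set (Edge V), pleP H' K →
      ∀ X Y : Set (Edge V), (pleP H' X ∧ pleP X K) → (pleP H' Y ∧ pleP Y K) →
        (∃ m, (pleP H' m ∧ pleP m K) ∧ pleP m X ∧ pleP m Y ∧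
          ∀ z, (pleP H' z ∧ pleP z K) → pleP z X → pleP z Y → pleP z m) ∧
        (∃ j, (pleP H' j ∧ pleP j K) ∧ pleP X j ∧ pleP Y j ∧
          ∀ z, (pleP H' z ∧ pleP z K) → pleP X z → pleP Y z → pleP j z)) := by
  constructor
  · refine ⟨Equiv.subtypeEquiv (Equiv.refl _) fun I => ?_, fun a b => ?_⟩
    · simp only [Equiv.refl_apply]
      rw [pleP_iff]
      constructor
      · rintro ⟨⟨hsub, hup⟩, -⟩
        exact ⟨hsub, fun x hx y hy hxy => hup y hy x hx hxy⟩
      · rintro ⟨hsub, hup⟩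
        exact ⟨⟨hsub, fun e he f hf hle => hup f hf e he hle⟩, pleP_empty I⟩
    · obtain ⟨haH, haup⟩ := (pleP_iff H a.val).mp a.2.1
      obtain ⟨hbH, hbup⟩ := (pleP_iff H b.val).mp b.2.1
      show pleP a.val b.val ↔ b.val ⊆ a.val
      rw [pleP_iff]
      constructor
      · exact fun h => h.1
      · intro hba
        exact ⟨hba, fun e he f hf hle => hbup e (haH he) f hf hle⟩
  · intro H' K hK X Y hX hY
    obtain ⟨hX1, hX2⟩ := hX
    obtain ⟨hY1, hY2⟩ := hY
    rw [pleP_iff] at hK hX1 hX2 hY1 hY2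
    constructor
    · refine ⟨X ∪ Y, ⟨?_, ?_⟩, ?_, ?_, ?_⟩
      · rw [pleP_iff]
        refine ⟨Set.union_subset hX1.1 hY1.1, ?_⟩
        rintro e he f (hf | hf) hle
        · exact Or.inl (hX1.2 e he f hf hle)
        · exact Or.inr (hY1.2 e he f hf hle)
      · rw [pleP_iff]
        refine ⟨hX2.1.trans Set.subset_union_left, ?_⟩
        rintro e (he | he) f hf hle
        · exact hX2.2 e he f hf hle
        · exact hY2.2 e he f hf hle
      · rw [pleP_iff]
        refine ⟨Set.subset_union_left, ?_⟩
        rintro e (he | he) f hf hle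
        · exact hX1.2 e (hX1.1 he) f hf hle
        · exact hX1.2 e (hY1.1 he) f hf hle
      · rw [pleP_iff]
        refine ⟨Set.subset_union_right, ?_⟩
        rintro e (he | he) f hf hle
        · exact hY1.2 e (hX1.1 he) f hf hle
        · exact hY1.2 e (hY1.1 he) f hf hle
      · intro z hz hzX hzY
        obtain ⟨hz1, hz2⟩ := hz
        rw [pleP_iff] at hz1 hzX hzY ⊢
        refine ⟨Set.union_subset hzX.1 hzY.1, ?_⟩
        rintro e he f (hf | hf) hle
        · exact Or.inl (hX1.2 e (hz1.1 he) f hf hle)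
        · exact Or.inr (hY1.2 e (hz1.1 he) f hf hle)
    · refine ⟨X ∩ Y, ⟨?_, ?_⟩, ?_, ?_, ?_⟩
      · rw [pleP_iff]
        refine ⟨Set.inter_subset_left.trans hX1.1, ?_⟩
        rintro e he f ⟨hfX, hfY⟩ hle
        exact ⟨hX1.2 e he f hfX hle, hY1.2 e he f hfY hle⟩
      · rw [pleP_iff]
        refine ⟨Set.subset_inter hX2.1 hY2.1, ?_⟩
        rintro e ⟨heX, -⟩ f hf hle
        exact hX2.2 e heX f hf hle
      · rw [pleP_iff]
        refine ⟨Set.inter_subset_left, ?_⟩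
        rintro e he f ⟨hfX, hfY⟩ hle
        exact ⟨hX1.2 e (hX1.1 he) f hfX hle, hY1.2 e (hX1.1 he) f hfY hle⟩
      · rw [pleP_iff]
        refine ⟨Set.inter_subset_right, ?_⟩
        rintro e he f ⟨hfX, hfY⟩ hle
        exact ⟨hX1.2 e (hY1.1 he) f hfX hle, hY1.2 e (hY1.1 he) f hfY hle⟩
      · intro z hz hXz hYz
        rw [pleP_iff] at hXz hYz ⊢
        refine ⟨Set.subset_inter hXz.1 hYz.1, ?_⟩
        rintro e ⟨heX, -⟩ f hf hle
        exact hXz.2 e heX f hf hle
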